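/- The derivative of s ↦ Γ(s)·L(s,χ) at s = 1 equals (1/2)·∫₀^∞ (log t)/cosh t dt, where χ is the nontrivial Dirichlet character mod 4. -/

import Mathlib

/-!
For `t > 0`, `1 / (2 cosh t) = ∑ₙ χ(n) e^{-nt}` (a geometric series in `-e^{-2t}`), so
integrating termwise against `t^{s-1}` gives
`Γ(s) L(s, χ) = ∫₀^∞ t^{s-1} / (2 cosh t) dt` for `re s > 1`. Both sides are holomorphic on
`re s > 0`, the left because `χ` is nontrivial and the right because `1 / cosh` is bounded and
decays exponentially, so the identity theorem extends the equality to `re s > 0`.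
Differentiating the Mellin transform under the integral sign at `s = 1` brings down the factor
`log t`.
-/

/-- The nontrivial Dirichlet character mod 4, with values in ℂ. -/
noncomputable def chi4 : DirichletCharacter ℂ 4 :=
  ZMod.χ₄.ringHomComp (Int.castRingHom ℂ)

open Complex MeasureTheory Set Filter Asymptotics Topology

theorem mellin_hasDerivAt_of_isBigO_rpow_exp {E : Type*} [NormedAddCommGroup E]
    [NormedSpace ℂ E] {a b : ℝ} (ha : 0 < a) {f : ℝ → E} {s : ℂ}
    (hfc : LocallyIntegrableOn f (Ioi 0)) (hf_top : f =O[atTop] fun t => Real.exp (-a * t))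
    (hf_bot : f =O[𝓝[>] 0] (· ^ (-b))) (hs_bot : b < s.re) :
    HasDerivAt (mellin f) (mellin (fun t => Real.log t • f t) s) s :=
  (mellin_hasDerivAt_of_isBigO_rpow hfc
    (hf_top.trans (isLittleO_exp_neg_mul_rpow_atTop ha _).isBigO) (lt_add_one _) hf_bot
    hs_bot).2

theorem Gamma_mul_LSeries_eq_mellin {f : ℕ → ℂ} {F : ℝ → ℂ} {s : ℂ} (hf0 : f 0 = 0)
    (hs : 0 < s.re) (hf : LSeriesSummable f s)
    (hF : ∀ t ∈ Ioi (0 : ℝ), HasSum (fun n : ℕ => f n * Real.exp (-n * t)) (F t)) :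
    Gamma s * LSeries f s = mellin F s := by
  have hsum : Summable fun n : ℕ => ‖f n‖ / (n : ℝ) ^ s.re := by
    refine hf.norm.congr fun n => ?_
    rw [LSeries.norm_term_eq]
    split_ifs with hn
    · simp [hn, hf0]
    · rfl
  have hp (n : ℕ) : f n = 0 ∨ 0 < (n : ℝ) := by
    rcases eq_or_ne n 0 with rfl | hn
    · exact .inl hf0
    · exact .inr (by positivity)
  refine (hf.hasSum.mul_left (Gamma s)).unique
    ((hasSum_mellin hp hs hF hsum).congr_fun fun n => ?_)
  rcases eq_or_ne n 0 with rfl | hn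
  · simp [hf0]
  · simp [LSeries.term_of_ne_zero hn, mul_div_assoc]

namespace DirichletCharacter

variable {N : ℕ} [NeZero N] {χ : DirichletCharacter ℂ N}

lemma differentiableOn_Gamma_mul_LFunction (hχ : χ ≠ 1) :
    DifferentiableOn ℂ (fun s => Gamma s * LFunction χ s) {s | 0 < s.re} := by
  intro s (hs : 0 < s.re)
  have hΓ : DifferentiableAt ℂ Gamma s := differentiableAt_Gamma s fun m hm => by
    have : s.re ≤ 0 := by simp [hm]
    linarith
  exact (hΓ.mul (differentiable_LFunction hχ s)).differentiableWithinAt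

lemma Gamma_mul_LFunction_eq_mellin (hχ : χ ≠ 1) {F : ℝ → ℂ}
    (hF : ∀ t ∈ Ioi (0 : ℝ), HasSum (fun n : ℕ => χ n * Real.exp (-n * t)) (F t))
    (hF_diff : DifferentiableOn ℂ (mellin F) {s | 0 < s.re}) :
    EqOn (fun s => Gamma s * LFunction χ s) (mellin F) {s | 0 < s.re} := by
  have hU : IsOpen {s : ℂ | 0 < s.re} := isOpen_lt continuous_const continuous_re
  have hχ0 : χ (0 : ℕ) = 0 := by simpa using χ.map_zero' (mt (level_one' χ) hχ)
  have hconv : {s : ℂ | 1 < s.re} ∈ 𝓝 (2 : ℂ) :=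
    (isOpen_lt continuous_const continuous_re).mem_nhds (by norm_num)
  have hagree : (fun s => Gamma s * LFunction χ s) =ᶠ[𝓝 2] mellin F := by
    filter_upwards [hconv] with s (hs : 1 < s.re)
    rw [LFunction_eq_LSeries χ hs]
    exact Gamma_mul_LSeries_eq_mellin hχ0 (by linarith) (LSeriesSummable_of_one_lt_re χ hs) hF
  refine ((differentiableOn_Gamma_mul_LFunction hχ).analyticOnNhd hU)
    |>.eqOn_of_preconnected_of_eventuallyEq (hF_diff.analyticOnNhd hU)
      (convex_halfSpace_re_gt 0).isPreconnected ?_ hagree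
  show (0 : ℝ) < (2 : ℂ).re
  norm_num

end DirichletCharacter

lemma chi4_natCast (n : ℕ) : chi4 n = ((ZMod.χ₄ n : ℝ) : ℂ) := by
  simp [chi4, MulChar.ringHomComp_apply]

lemma chi4_ne_one : chi4 ≠ 1 := by
  refine MulChar.ne_one_iff.mpr ⟨-1, ?_⟩
  simp [chi4, MulChar.ringHomComp_apply]
  decide

lemma hasSum_neg_one_pow_mul_exp_neg_odd_mul {t : ℝ} (ht : 0 < t) :
    HasSum (fun k : ℕ => (-1) ^ k * Real.exp (-(2 * k + 1 : ℕ) * t))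
      ((Real.cosh t)⁻¹ / 2) := by
  have hx : |-Real.exp (-(2 * t))| < 1 := by
    rw [abs_neg, Real.abs_exp, Real.exp_lt_one_iff]
    linarith
  have hgeom := (hasSum_geometric_of_abs_lt_one hx).mul_right (Real.exp (-t))
  have hfactor : 1 - -Real.exp (-(2 * t)) = Real.exp (-t) * (2 * Real.cosh t) := by
    rw [Real.cosh_eq, mul_div_cancel₀ _ two_ne_zero, mul_add, ← Real.exp_add, ← Real.exp_add,
      neg_add_cancel, Real.exp_zero]
    ring_nf
  have hsum : (1 - -Real.exp (-(2 * t)))⁻¹ * Real.exp (-t) = (Real.cosh t)⁻¹ / 2 := by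
    have := (Real.cosh_pos t).ne'
    rw [hfactor]
    field_simp
  rw [hsum] at hgeom
  refine hgeom.congr_fun fun k => ?_
  rw [neg_pow (Real.exp _), ← Real.exp_nat_mul, mul_assoc, ← Real.exp_add]
  push_cast
  ring_nf

lemma hasSum_χ₄_mul_exp_neg_mul {t : ℝ} (ht : 0 < t) :
    HasSum (fun n : ℕ => (ZMod.χ₄ n : ℝ) * Real.exp (-n * t)) ((Real.cosh t)⁻¹ / 2) := by
  have hodd : Function.Injective fun k : ℕ => 2 * k + 1 := fun a b h => by simp_all
  refine (hodd.hasSum_iff fun n hn => ?_).mp ?_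
  · have : n % 2 = 0 := by
      by_contra h
      exact hn ⟨n / 2, by dsimp only; omega⟩
    rw [ZMod.χ₄_nat_eq_if_mod_four, if_pos this, Int.cast_zero, zero_mul]
  · convert hasSum_neg_one_pow_mul_exp_neg_odd_mul ht using 2 with k
    rw [Function.comp_apply, ZMod.χ₄_eq_neg_one_pow (by omega),
      show (2 * k + 1) / 2 = k by omega]
    push_cast
    ring

noncomputable def halfSech (t : ℝ) : ℂ := ((Real.cosh t)⁻¹ / 2 : ℝ)

lemma continuous_halfSech : Continuous halfSech :=
  continuous_ofReal.comp ((Real.continuous_cosh.inv₀ fun t => (Real.cosh_pos t).ne').div_const 2)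

lemma norm_halfSech (t : ℝ) : ‖halfSech t‖ = (Real.cosh t)⁻¹ / 2 := by
  rw [halfSech, norm_real, Real.norm_of_nonneg (by have := Real.cosh_pos t; positivity)]

lemma halfSech_isBigO_exp_neg : halfSech =O[atTop] fun t => Real.exp (-1 * t) := by
  refine .of_bound 1 (.of_forall fun t => ?_)
  rw [norm_halfSech, Real.norm_of_nonneg (Real.exp_pos _).le, one_mul, neg_one_mul]
  have hcosh : Real.exp t ≤ 2 * Real.cosh t := by
    rw [Real.cosh_eq]
    linarith [Real.exp_pos (-t)]
  calc (Real.cosh t)⁻¹ / 2 = (2 * Real.cosh t)⁻¹ := by ring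
    _ ≤ (Real.exp t)⁻¹ := inv_anti₀ (Real.exp_pos t) hcosh
    _ = Real.exp (-t) := (Real.exp_neg t).symm

lemma halfSech_isBigO_one : halfSech =O[𝓝[>] 0] (· ^ (-0 : ℝ)) := by
  refine .of_bound 1 (.of_forall fun t => ?_)
  rw [norm_halfSech, neg_zero, Real.rpow_zero, norm_one, one_mul]
  linarith [inv_le_one_of_one_le₀ (Real.one_le_cosh t)]

lemma hasDerivAt_mellin_halfSech {s : ℂ} (hs : 0 < s.re) :
    HasDerivAt (mellin halfSech) (mellin (fun t => Real.log t • halfSech t) s) s :=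
  mellin_hasDerivAt_of_isBigO_rpow_exp one_pos
    (continuous_halfSech.locallyIntegrable.locallyIntegrableOn _) halfSech_isBigO_exp_neg
    halfSech_isBigO_one hs

lemma hasSum_chi4_mul_exp_neg_mul {t : ℝ} (ht : 0 < t) :
    HasSum (fun n : ℕ => chi4 n * Real.exp (-n * t)) (halfSech t) := by
  simp_rw [chi4_natCast, ← ofReal_mul]
  exact hasSum_ofReal.mpr (hasSum_χ₄_mul_exp_neg_mul ht)

lemma mellin_log_smul_halfSech_one :
    mellin (fun t => Real.log t • halfSech t) 1 =
      ((∫ t in Ioi (0 : ℝ), Real.log t / Real.cosh t : ℝ) : ℂ) / 2 := by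
  have hintegrand (t : ℝ) :
      Real.log t • halfSech t = ((Real.log t / Real.cosh t / 2 : ℝ) : ℂ) := by
    rw [halfSech, real_smul, ← ofReal_mul]
    ring_nf
  simp only [mellin, sub_self, cpow_zero, one_smul, hintegrand]
  rw [integral_complex_ofReal, integral_div, ofReal_div, ofReal_ofNat]

theorem hasDerivAt_gamma_mul_L :
    HasDerivAt (fun s : ℂ => Complex.Gamma s * DirichletCharacter.LFunction chi4 s)
      (((∫ t in Set.Ioi (0 : ℝ), Real.log t / Real.cosh t : ℝ) : ℂ) / 2) 1 := by
  have hright : {s : ℂ | 0 < s.re} ∈ 𝓝 1 :=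
    (isOpen_lt continuous_const continuous_re).mem_nhds (by norm_num)
  have heq := DirichletCharacter.Gamma_mul_LFunction_eq_mellin chi4_ne_one
    (fun _ => hasSum_chi4_mul_exp_neg_mul)
    fun s hs => (hasDerivAt_mellin_halfSech hs).differentiableAt.differentiableWithinAt
  rw [← mellin_log_smul_halfSech_one]
  exact (hasDerivAt_mellin_halfSech (by norm_num)).congr_of_eventuallyEq
    (eventually_of_mem hright heq)
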